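/- arXiv:1102.3471 — 2 statements merged into one kernel-verified Lean document; each statement's English description precedes it below -/
import Mathlib

section
/- Let M be a statistical manifold of dimension m ≥ 3 that is conjugate symmetric (R^{(−1)}_{ijkl} = R^{(−1)}_{jilk}) and conformally mixture-flat (W^{(−1)l}_{ijk} = 0). Then R^{(−1)}_{ijkl} = ρ(g_{jk}g_{il} − g_{ik}g_{jl}) where ρ = R^{(−1)}/(m(m−1)) is constant on M, so M is a space of constant mixture curvature. -/
noncomputable def pd {m : ℕ} (i : Fin m) (f : (Fin m → ℝ) → ℝ) (x : Fin m → ℝ) : ℝ :=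
  fderiv ℝ f x (Pi.single i 1)

lemma contDiff_pd {m : ℕ} (i : Fin m) {f : (Fin m → ℝ) → ℝ} (hf : ContDiff ℝ (⊤ : ℕ∞) f) :
    ContDiff ℝ (⊤ : ℕ∞) (pd i f) := (hf.fderiv_right (by simp)).clm_apply contDiff_const

lemma pd_congr {m : ℕ} (i : Fin m) {f g : (Fin m → ℝ) → ℝ} {U : Set (Fin m → ℝ)}
    (hU : IsOpen U) {x : Fin m → ℝ} (hx : x ∈ U) (h : ∀ y ∈ U, f y = g y) :
    pd i f x = pd i g x := by
  unfold pd
  rw [Filter.EventuallyEq.fderiv_eq (Filter.eventually_of_mem (hU.mem_nhds hx) h)]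

lemma pd_sum {m n : ℕ} (i : Fin m) (f : Fin n → (Fin m → ℝ) → ℝ) (x : Fin m → ℝ)
    (hf : ∀ j, DifferentiableAt ℝ (f j) x) :
    pd i (fun y => ∑ j, f j y) x = ∑ j, pd i (f j) x := by
  unfold pd
  rw [fderiv_fun_sum (fun j _ => hf j)]
  simp

lemma pd_mul {m : ℕ} (i : Fin m) {f g : (Fin m → ℝ) → ℝ} {x : Fin m → ℝ}
    (hf : DifferentiableAt ℝ f x) (hg : DifferentiableAt ℝ g x) :
    pd i (fun y => f y * g y) x = pd i f x * g x + f x * pd i g x := by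
  unfold pd
  rw [fderiv_fun_mul hf hg]
  simp only [ContinuousLinearMap.add_apply, ContinuousLinearMap.smul_apply, smul_eq_mul]
  ring

lemma pd_neg {m : ℕ} (i : Fin m) (f : (Fin m → ℝ) → ℝ) (x : Fin m → ℝ) :
    pd i (fun y => -f y) x = - pd i f x := by
  unfold pd; rw [fderiv_fun_neg]; simp

lemma pd_const_mul {m : ℕ} (i : Fin m) {f : (Fin m → ℝ) → ℝ} {x : Fin m → ℝ}
    (hf : DifferentiableAt ℝ f x) (c : ℝ) :
    pd i (fun y => c * f y) x = c * pd i f x := by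
  unfold pd; rw [fderiv_const_mul hf c]; simp

lemma pd_lin {m : ℕ} (i : Fin m) {f g : (Fin m → ℝ) → ℝ} {x : Fin m → ℝ}
    (hf : DifferentiableAt ℝ f x) (hg : DifferentiableAt ℝ g x) (a b : ℝ) :
    pd i (fun y => a * f y - b * g y) x = a * pd i f x - b * pd i g x := by
  unfold pd
  rw [fderiv_fun_sub ((hf.const_mul a)) ((hg.const_mul b)), fderiv_const_mul hf a,
    fderiv_const_mul hg b]
  simp

lemma fderiv_eq_zero_of_pd {m : ℕ} {f : (Fin m → ℝ) → ℝ} {x : Fin m → ℝ}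
    (h : ∀ i, pd i f x = 0) : fderiv ℝ f x = 0 := by
  ext v
  have hv : v = ∑ i, v i • (Pi.single i (1:ℝ) : Fin m → ℝ) := by
    funext j; simp [Finset.sum_apply, Pi.single_apply]
  rw [ContinuousLinearMap.zero_apply]
  conv_lhs => rw [hv]
  rw [map_sum]
  simp only [map_smul]
  simp only [pd] at h
  simp [h]

lemma sum_delta1 {n : ℕ} (f : Fin n → ℝ) (b : Fin n) :
    ∑ a, (if b = a then f a else 0) = f b := by simp

lemma sum_delta2 {n : ℕ} (f : Fin n → ℝ) (b : Fin n) :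
    ∑ a, (if a = b then f a else 0) = f b := by simp

/-- if a statistical manifold of dimension `m ≥ 3` is conjugate symmetric
(`R^{(−1)}_{ijkl} = R^{(−1)}_{jilk}`) and conformally mixture-flat (`W^{(−1)l}_{ijk} = 0`),
then `R^{(−1)}_{ijkl} = ρ(g_{jk}g_{il} − g_{ik}g_{jl})` with `ρ = R^{(−1)}/(m(m−1))`
constant on `M`; i.e. it is a space of constant mixture curvature. -/
theorem stmt9 {m : ℕ} (hm : 3 ≤ m)
    (U : Set (Fin m → ℝ)) (hU : IsOpen U) (hUc : Convex ℝ U) (hne : U.Nonempty)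
    (g ginv : Fin m → Fin m → (Fin m → ℝ) → ℝ)
    (hgsm : ∀ i j, ContDiff ℝ (⊤ : ℕ∞) (g i j)) (hginvsm : ∀ i j, ContDiff ℝ (⊤ : ℕ∞) (ginv i j))
    (hginv : ∀ i k, ∀ x ∈ U, (∑ j, g i j x * ginv j k x) = if i = k then 1 else 0)
    (hgsym : ∀ i j x, g i j x = g j i x)
    (Γ1 Γm1 : Fin m → Fin m → Fin m → (Fin m → ℝ) → ℝ)
    (hΓsm : ∀ i j k, ContDiff ℝ (⊤ : ℕ∞) (Γ1 i j k) ∧ ContDiff ℝ (⊤ : ℕ∞) (Γm1 i j k))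
    (hΓ1sym : ∀ i j k x, Γ1 i j k x = Γ1 j i k x)
    (hΓm1sym : ∀ i j k x, Γm1 i j k x = Γm1 j i k x)
    (hdual : ∀ i j k, ∀ x ∈ U, pd i (g j k) x = Γ1 i j k x + Γm1 i k j x)
    (Gm : Fin m → Fin m → Fin m → (Fin m → ℝ) → ℝ)
    (hGm : ∀ i j l x, Gm i j l x = ∑ r, Γm1 i j r x * ginv r l x)
    (T : Fin m → Fin m → Fin m → (Fin m → ℝ) → ℝ)
    (hTdef : ∀ i j k x, T i j k x = Γm1 i j k x - Γ1 i j k x)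
    (hTsym : ∀ i j k x, T i j k x = T j i k x ∧ T i j k x = T i k j x)
    (hnabg : ∀ i j k, ∀ x ∈ U, pd i (g j k) x
      - ∑ e, Gm i j e x * g e k x - ∑ e, Gm i k e x * g j e x = - T i j k x)
    (Rlowm1 : Fin m → Fin m → Fin m → Fin m → (Fin m → ℝ) → ℝ)
    (hRlowm1 : ∀ i j k l x, Rlowm1 i j k l x =
      pd i (Γm1 j k l) x - pd j (Γm1 i k l) x +
        ∑ r, ∑ t, ginv r t x * (Γm1 i k r x * Γm1 j t l x - Γm1 j k r x * Γm1 i t l x))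
    (RU : Fin m → Fin m → Fin m → Fin m → (Fin m → ℝ) → ℝ)
    (hRU : ∀ i j k l x, RU i j k l x = ∑ r, Rlowm1 i j k r x * ginv r l x)
    (Ric : Fin m → Fin m → (Fin m → ℝ) → ℝ)
    (hRic : ∀ j k x, Ric j k x = ∑ l, RU l j k l x)
    (Scal : (Fin m → ℝ) → ℝ)
    (hScal : ∀ x, Scal x = ∑ j, ∑ k, Ric j k x * ginv j k x)
    -- conjugate symmetry and conformal mixture-flatness
    (hconj : ∀ i j k l, ∀ x ∈ U, Rlowm1 i j k l x = Rlowm1 j i l k x)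
    (hW4 : ∀ i j k l, ∀ x ∈ U, RU i j k l x = (1 / ((m : ℝ) - 1)) *
      ((if i = l then Ric j k x else 0) - (if j = l then Ric i k x else 0)))
    -- the second Bianchi identity for the (−1)-connection
    (nabRU : Fin m → Fin m → Fin m → Fin m → Fin m → (Fin m → ℝ) → ℝ)
    (hnabRU : ∀ a i j k l x, nabRU a i j k l x = pd a (RU i j k l) x
      - ∑ e, Gm a i e x * RU e j k l x - ∑ e, Gm a j e x * RU i e k l x
      - ∑ e, Gm a k e x * RU i j e l x + ∑ e, Gm a e l x * RU i j k e x)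
    (hB2 : ∀ r i j k l, ∀ x ∈ U,
      nabRU r i j k l x + nabRU j r i k l x + nabRU i j r k l x = 0) :
    ∃ ρ : ℝ, (∀ x ∈ U, Scal x / ((m : ℝ) * ((m : ℝ) - 1)) = ρ) ∧
      ∀ i j k l, ∀ x ∈ U,
        Rlowm1 i j k l x = ρ * (g j k x * g i l x - g i k x * g j l x) := by
  classical
  have hm3 : (3:ℝ) ≤ (m:ℝ) := by exact_mod_cast hm
  have hm0 : (m:ℝ) ≠ 0 := by linarith
  have hm1 : (m:ℝ) - 1 ≠ 0 := by linarith
  set c : ℝ := 1 / ((m:ℝ) - 1) with hc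
  have hcne : c ≠ 0 := one_div_ne_zero hm1
  have hc1 : c ≠ 1 := by
    intro h
    rw [hc, div_eq_one_iff_eq hm1] at h
    linarith
  -- smoothness
  have hRlsm : ∀ i j k l, ContDiff ℝ (⊤ : ℕ∞) (Rlowm1 i j k l) := by
    intro i j k l
    have heq : Rlowm1 i j k l = fun x => pd i (Γm1 j k l) x - pd j (Γm1 i k l) x +
        ∑ r, ∑ t, ginv r t x * (Γm1 i k r x * Γm1 j t l x - Γm1 j k r x * Γm1 i t l x) :=
      funext (hRlowm1 i j k l)
    rw [heq]
    refine ContDiff.add (ContDiff.sub (contDiff_pd _ (hΓsm _ _ _).2)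
      (contDiff_pd _ (hΓsm _ _ _).2)) ?_
    refine ContDiff.sum fun r _ => ContDiff.sum fun t _ => ?_
    exact (hginvsm r t).mul (((hΓsm _ _ _).2.mul (hΓsm _ _ _).2).sub
      ((hΓsm _ _ _).2.mul (hΓsm _ _ _).2))
  have hRUsm : ∀ i j k l, ContDiff ℝ (⊤ : ℕ∞) (RU i j k l) := by
    intro i j k l
    have heq : RU i j k l = fun x => ∑ r, Rlowm1 i j k r x * ginv r l x :=
      funext (hRU i j k l)
    rw [heq]
    exact ContDiff.sum fun r _ => (hRlsm _ _ _ _).mul (hginvsm _ _)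
  have hRicsm : ∀ j k, ContDiff ℝ (⊤ : ℕ∞) (Ric j k) := by
    intro j k
    have heq : Ric j k = fun x => ∑ l, RU l j k l x := funext (hRic j k)
    rw [heq]
    exact ContDiff.sum fun l _ => hRUsm _ _ _ _
  have hScalsm : ContDiff ℝ (⊤ : ℕ∞) Scal := by
    have heq : Scal = fun x => ∑ j, ∑ k, Ric j k x * ginv j k x := funext hScal
    rw [heq]
    exact ContDiff.sum fun j _ => ContDiff.sum fun k _ => (hRicsm _ _).mul (hginvsm _ _)
  have dRU : ∀ i j k l x, DifferentiableAt ℝ (RU i j k l) x :=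
    fun i j k l x => ((hRUsm i j k l).differentiable (by simp)) x
  have dRic : ∀ j k x, DifferentiableAt ℝ (Ric j k) x :=
    fun j k x => ((hRicsm j k).differentiable (by simp)) x
  have dScal : ∀ x, DifferentiableAt ℝ Scal x := fun x => (hScalsm.differentiable (by simp)) x
  have dg : ∀ i j x, DifferentiableAt ℝ (g i j) x :=
    fun i j x => ((hgsm i j).differentiable (by simp)) x
  -- matrix facts: ginv is a two-sided inverse and symmetric on U
  have hmat : ∀ x ∈ U, (∀ i k, (∑ j, ginv i j x * g j k x) = if i = k then 1 else 0)
      ∧ (∀ i j, ginv i j x = ginv j i x) := by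
    intro x hx
    set A := (Matrix.of fun i j => g i j x : Matrix (Fin m) (Fin m) ℝ) with hA
    set B := (Matrix.of fun i j => ginv i j x : Matrix (Fin m) (Fin m) ℝ) with hB
    have hAB : A * B = 1 := by
      ext i k
      simp only [Matrix.mul_apply, hA, hB, Matrix.of_apply, Matrix.one_apply]
      exact hginv i k x hx
    have hBA : B * A = 1 := mul_eq_one_comm.mp hAB
    have hAt : A.transpose = A := by
      ext i j; simp only [Matrix.transpose_apply, hA, Matrix.of_apply]; exact hgsym j i x
    have hBt : B.transpose = B := by
      have h1 : B.transpose * A = 1 := by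
        rw [← hAt, ← Matrix.transpose_mul, hAB, Matrix.transpose_one]
      calc B.transpose = B.transpose * (A * B) := by rw [hAB, mul_one]
        _ = (B.transpose * A) * B := by rw [mul_assoc]
        _ = B := by rw [h1, one_mul]
    constructor
    · intro i k
      have := Matrix.ext_iff.2 hBA i k
      simpa only [Matrix.mul_apply, hA, hB, Matrix.of_apply, Matrix.one_apply] using this
    · intro i j
      have := Matrix.ext_iff.2 hBt j i
      simpa only [Matrix.transpose_apply, hB, Matrix.of_apply] using this
  -- Rlowm1 in terms of Ric (lowered W = 0 identity)
  have hRg : ∀ i j k l, ∀ x ∈ U, Rlowm1 i j k l x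
      = c * (g i l x * Ric j k x - g j l x * Ric i k x) := by
    intro i j k l x hx
    obtain ⟨hB1, hgs⟩ := hmat x hx
    have h1 : ∑ r, RU i j k r x * g r l x = Rlowm1 i j k l x := by
      calc ∑ r, RU i j k r x * g r l x
          = ∑ r, ∑ s, Rlowm1 i j k s x * ginv s r x * g r l x := by
            refine Finset.sum_congr rfl fun r _ => ?_
            rw [hRU i j k r x, Finset.sum_mul]
        _ = ∑ s, ∑ r, Rlowm1 i j k s x * (ginv s r x * g r l x) := by
            rw [Finset.sum_comm]
            exact Finset.sum_congr rfl fun s _ => Finset.sum_congr rfl fun r _ => by ring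
        _ = ∑ s, Rlowm1 i j k s x * (if s = l then 1 else 0) := by
            refine Finset.sum_congr rfl fun s _ => ?_
            rw [← Finset.mul_sum, hB1 s l]
        _ = Rlowm1 i j k l x := by simp
    have h2 : ∑ r, RU i j k r x * g r l x
        = c * (Ric j k x * g i l x - Ric i k x * g j l x) := by
      calc ∑ r, RU i j k r x * g r l x
          = ∑ r, c * ((if i = r then Ric j k x else 0)
              - (if j = r then Ric i k x else 0)) * g r l x := by
            refine Finset.sum_congr rfl fun r _ => ?_
            rw [hW4 i j k r x hx]
        _ = c * (Ric j k x * g i l x - Ric i k x * g j l x) := by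
            simp only [sub_mul, mul_sub, ite_mul, zero_mul, mul_ite, mul_zero,
              Finset.sum_sub_distrib, Finset.mul_sum, Finset.sum_ite_eq,
              Finset.mem_univ, if_true]
            ring
    rw [← h1, h2]; ring
  -- Einstein-type identity: Ric = (Scal/m) g on U
  have hRicg : ∀ j k, ∀ x ∈ U, Ric j k x = 1 / (m:ℝ) * Scal x * g j k x := by
    intro j k x hx
    obtain ⟨hB1, hgs⟩ := hmat x hx
    have E : ∀ i l, g i l x * Ric j k x - g j l x * Ric i k x
        = g j k x * Ric i l x - g i k x * Ric j l x := by
      intro i l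
      have h1 := hRg i j k l x hx
      have h2 := hRg j i l k x hx
      have h3 := hconj i j k l x hx
      have h4 : c * (g i l x * Ric j k x - g j l x * Ric i k x)
          = c * (g j k x * Ric i l x - g i k x * Ric j l x) := by
        rw [← h1, h3, h2]
      exact mul_left_cancel₀ hcne h4
    have hSum : ∑ i, ∑ l, ginv i l x * (g i l x * Ric j k x - g j l x * Ric i k x)
        = ∑ i, ∑ l, ginv i l x * (g j k x * Ric i l x - g i k x * Ric j l x) := by
      refine Finset.sum_congr rfl fun i _ => Finset.sum_congr rfl fun l _ => ?_
      rw [E i l]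
    have S1 : ∑ i, ∑ l, ginv i l x * (g i l x * Ric j k x) = (m:ℝ) * Ric j k x := by
      calc ∑ i, ∑ l, ginv i l x * (g i l x * Ric j k x)
          = ∑ i, (∑ l, ginv i l x * g l i x) * Ric j k x := by
            refine Finset.sum_congr rfl fun i _ => ?_
            rw [Finset.sum_mul]
            refine Finset.sum_congr rfl fun l _ => ?_
            rw [hgsym i l]; ring
        _ = ∑ _i : Fin m, (1:ℝ) * Ric j k x := by
            refine Finset.sum_congr rfl fun i _ => ?_
            rw [hB1 i i]; simp
        _ = (m:ℝ) * Ric j k x := by simp [Finset.card_univ]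
    have S2 : ∑ i, ∑ l, ginv i l x * (g j l x * Ric i k x) = Ric j k x := by
      calc ∑ i, ∑ l, ginv i l x * (g j l x * Ric i k x)
          = ∑ i, (∑ l, g j l x * ginv l i x) * Ric i k x := by
            refine Finset.sum_congr rfl fun i _ => ?_
            rw [Finset.sum_mul]
            refine Finset.sum_congr rfl fun l _ => ?_
            rw [hgs i l]; ring
        _ = ∑ i, (if j = i then (1:ℝ) else 0) * Ric i k x := by
            refine Finset.sum_congr rfl fun i _ => ?_
            rw [hginv j i x hx]
        _ = Ric j k x := by simp
    have S3 : ∑ i, ∑ l, ginv i l x * (g j k x * Ric i l x) = g j k x * Scal x := by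
      rw [hScal x, Finset.mul_sum]
      refine Finset.sum_congr rfl fun i _ => ?_
      rw [Finset.mul_sum]
      refine Finset.sum_congr rfl fun l _ => ?_
      ring
    have S4 : ∑ i, ∑ l, ginv i l x * (g i k x * Ric j l x) = Ric j k x := by
      rw [Finset.sum_comm]
      calc ∑ l, ∑ i, ginv i l x * (g i k x * Ric j l x)
          = ∑ l, (∑ i, ginv l i x * g i k x) * Ric j l x := by
            refine Finset.sum_congr rfl fun l _ => ?_
            rw [Finset.sum_mul]
            refine Finset.sum_congr rfl fun i _ => ?_
            rw [hgs i l]; ring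
        _ = ∑ l, (if l = k then (1:ℝ) else 0) * Ric j l x := by
            refine Finset.sum_congr rfl fun l _ => ?_
            rw [hB1 l k]
        _ = Ric j k x := by simp
    have hfinal : (m:ℝ) * Ric j k x - Ric j k x = g j k x * Scal x - Ric j k x := by
      have hL : ∑ i, ∑ l, ginv i l x * (g i l x * Ric j k x - g j l x * Ric i k x)
          = (m:ℝ) * Ric j k x - Ric j k x := by
        simp only [mul_sub, Finset.sum_sub_distrib]
        rw [S1, S2]
      have hR : ∑ i, ∑ l, ginv i l x * (g j k x * Ric i l x - g i k x * Ric j l x)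
          = g j k x * Scal x - Ric j k x := by
        simp only [mul_sub, Finset.sum_sub_distrib]
        rw [S3, S4]
      rw [← hL, ← hR]; exact hSum
    field_simp
    linarith
  -- antisymmetry of the curvature in the first two indices
  have hRlanti : ∀ i j k l x, Rlowm1 j i k l x = - Rlowm1 i j k l x := by
    intro i j k l x
    rw [hRlowm1, hRlowm1]
    have h : ∀ r t : Fin m, ginv r t x * (Γm1 j k r x * Γm1 i t l x - Γm1 i k r x * Γm1 j t l x)
        = -(ginv r t x * (Γm1 i k r x * Γm1 j t l x - Γm1 j k r x * Γm1 i t l x)) := by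
      intro r t; ring
    simp only [h, Finset.sum_neg_distrib]
    ring
  have hRUanti : ∀ i j k l x, RU j i k l x = - RU i j k l x := by
    intro i j k l x
    rw [hRU, hRU, ← Finset.sum_neg_distrib]
    refine Finset.sum_congr rfl fun r _ => ?_
    rw [hRlanti]; ring
  -- pd of Ricci traces
  have hpdRicsum : ∀ a j k x, pd a (Ric j k) x = ∑ l, pd a (RU l j k l) x := by
    intro a j k x
    have heq : Ric j k = fun y => ∑ l, RU l j k l y := funext (hRic j k)
    rw [heq, pd_sum a _ x (fun l => dRU l j k l x)]
  have hpdRicsum2 : ∀ a j k x, ∑ l, pd a (RU j l k l) x = - pd a (Ric j k) x := by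
    intro a j k x
    rw [← pd_sum a _ x (fun l => dRU j l k l x)]
    have heq : (fun y => ∑ l, RU j l k l y) = fun y => -Ric j k y := by
      funext y
      rw [hRic, ← Finset.sum_neg_distrib]
      exact Finset.sum_congr rfl fun l _ => hRUanti l j k l y
    rw [heq]
    exact pd_neg a (Ric j k) x
  -- symmetrized contracted second Bianchi identity
  have hDsym : ∀ i j k, ∀ x ∈ U,
      pd i (Ric j k) x - ∑ e, Gm i j e x * Ric e k x - ∑ e, Gm i k e x * Ric j e x
    = pd j (Ric i k) x - ∑ e, Gm j i e x * Ric e k x - ∑ e, Gm j k e x * Ric i e x := by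
    intro i j k x hx
    have hT2 : ∑ l, nabRU j l i k l x
        = pd j (Ric i k) x - ∑ e, Gm j i e x * Ric e k x - ∑ e, Gm j k e x * Ric i e x := by
      have hsplit : ∑ l, nabRU j l i k l x
          = (∑ l, pd j (RU l i k l) x)
            - (∑ l, ∑ e, Gm j l e x * RU e i k l x)
            - (∑ l, ∑ e, Gm j i e x * RU l e k l x)
            - (∑ l, ∑ e, Gm j k e x * RU l i e l x)
            + (∑ l, ∑ e, Gm j e l x * RU l i k e x) := by
        simp only [hnabRU, Finset.sum_add_distrib, Finset.sum_sub_distrib]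
      rw [hsplit]
      have e1 : ∑ l, ∑ e, Gm j l e x * RU e i k l x = ∑ l, ∑ e, Gm j e l x * RU l i k e x :=
        Finset.sum_comm
      have e2 : ∑ l, ∑ e, Gm j i e x * RU l e k l x = ∑ e, Gm j i e x * Ric e k x := by
        rw [Finset.sum_comm]
        refine Finset.sum_congr rfl fun e _ => ?_
        rw [← Finset.mul_sum, ← hRic]
      have e3 : ∑ l, ∑ e, Gm j k e x * RU l i e l x = ∑ e, Gm j k e x * Ric i e x := by
        rw [Finset.sum_comm]
        refine Finset.sum_congr rfl fun e _ => ?_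
        rw [← Finset.mul_sum, ← hRic]
      rw [e1, e2, e3, ← hpdRicsum]
      ring
    have hT3 : ∑ l, nabRU i j l k l x
        = - pd i (Ric j k) x + ∑ e, Gm i j e x * Ric e k x + ∑ e, Gm i k e x * Ric j e x := by
      have hsplit : ∑ l, nabRU i j l k l x
          = (∑ l, pd i (RU j l k l) x)
            - (∑ l, ∑ e, Gm i j e x * RU e l k l x)
            - (∑ l, ∑ e, Gm i l e x * RU j e k l x)
            - (∑ l, ∑ e, Gm i k e x * RU j l e l x)
            + (∑ l, ∑ e, Gm i e l x * RU j l k e x) := by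
        simp only [hnabRU, Finset.sum_add_distrib, Finset.sum_sub_distrib]
      rw [hsplit]
      have e1 : ∑ l, ∑ e, Gm i l e x * RU j e k l x = ∑ l, ∑ e, Gm i e l x * RU j l k e x :=
        Finset.sum_comm
      have e2 : ∑ l, ∑ e, Gm i j e x * RU e l k l x = - ∑ e, Gm i j e x * Ric e k x := by
        rw [Finset.sum_comm, ← Finset.sum_neg_distrib]
        refine Finset.sum_congr rfl fun e _ => ?_
        have h2 : ∑ l, RU e l k l x = - Ric e k x := by
          rw [hRic, ← Finset.sum_neg_distrib]
          exact Finset.sum_congr rfl fun l _ => hRUanti l e k l x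
        rw [← Finset.mul_sum, h2]; ring
      have e3 : ∑ l, ∑ e, Gm i k e x * RU j l e l x = - ∑ e, Gm i k e x * Ric j e x := by
        rw [Finset.sum_comm, ← Finset.sum_neg_distrib]
        refine Finset.sum_congr rfl fun e _ => ?_
        have h2 : ∑ l, RU j l e l x = - Ric j e x := by
          rw [hRic, ← Finset.sum_neg_distrib]
          exact Finset.sum_congr rfl fun l _ => hRUanti l j e l x
        rw [← Finset.mul_sum, h2]; ring
      rw [e1, e2, e3, hpdRicsum2]
      ring
    have hT1 : ∑ l, nabRU l i j k l x
        = c * ((pd i (Ric j k) x - ∑ e, Gm i j e x * Ric e k x - ∑ e, Gm i k e x * Ric j e x)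
             - (pd j (Ric i k) x - ∑ e, Gm j i e x * Ric e k x
                - ∑ e, Gm j k e x * Ric i e x)) := by
      have hsplit : ∑ l, nabRU l i j k l x
          = (∑ l, pd l (RU i j k l) x)
            - (∑ l, ∑ e, Gm l i e x * RU e j k l x)
            - (∑ l, ∑ e, Gm l j e x * RU i e k l x)
            - (∑ l, ∑ e, Gm l k e x * RU i j e l x)
            + (∑ l, ∑ e, Gm l e l x * RU i j k e x) := by
        simp only [hnabRU, Finset.sum_add_distrib, Finset.sum_sub_distrib]
      rw [hsplit]
      have e1 : ∑ l, pd l (RU i j k l) x = c * (pd i (Ric j k) x - pd j (Ric i k) x) := by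
        have hpt : ∀ l : Fin m, pd l (RU i j k l) x
            = c * (if i = l then 1 else 0) * pd l (Ric j k) x
              - c * (if j = l then 1 else 0) * pd l (Ric i k) x := by
          intro l
          have h1 : pd l (RU i j k l) x
              = pd l (fun y => (c * (if i = l then 1 else 0)) * Ric j k y
                  - (c * (if j = l then 1 else 0)) * Ric i k y) x := by
            refine pd_congr l hU hx fun y hy => ?_
            rw [hW4 i j k l y hy]
            by_cases ha : i = l <;> by_cases hb : j = l <;> simp [ha, hb] <;> ring
          rw [h1, pd_lin l (dRic j k x) (dRic i k x)]
        rw [Finset.sum_congr rfl fun l _ => hpt l, Finset.sum_sub_distrib]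
        have q1 : ∑ l, c * (if i = l then 1 else 0) * pd l (Ric j k) x
            = c * pd i (Ric j k) x := by
          have := sum_delta1 (fun l => c * pd l (Ric j k) x) i
          rw [← this]
          refine Finset.sum_congr rfl fun l _ => ?_
          by_cases ha : i = l <;> simp [ha]
        have q2 : ∑ l, c * (if j = l then 1 else 0) * pd l (Ric i k) x
            = c * pd j (Ric i k) x := by
          have := sum_delta1 (fun l => c * pd l (Ric i k) x) j
          rw [← this]
          refine Finset.sum_congr rfl fun l _ => ?_
          by_cases ha : j = l <;> simp [ha]
        rw [q1, q2]; ring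
      have e2 : ∑ l, ∑ e, Gm l i e x * RU e j k l x
          = c * ((∑ l, Gm l i l x) * Ric j k x) - c * (∑ e, Gm j i e x * Ric e k x) := by
        have h1 : ∀ l : Fin m, ∑ e, Gm l i e x * RU e j k l x
            = c * (Gm l i l x * Ric j k x)
              - (if j = l then c * (∑ e, Gm l i e x * Ric e k x) else 0) := by
          intro l
          have h2 : ∀ e : Fin m, Gm l i e x * RU e j k l x
              = (if e = l then c * (Gm l i e x * Ric j k x) else 0)
                - (if j = l then c * (Gm l i e x * Ric e k x) else 0) := by
            intro e
            rw [hW4 e j k l x hx]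
            by_cases ha : e = l <;> by_cases hb : j = l <;> simp [ha, hb] <;> ring
          rw [Finset.sum_congr rfl fun e _ => h2 e, Finset.sum_sub_distrib]
          congr 1
          · exact sum_delta2 (fun e => c * (Gm l i e x * Ric j k x)) l
          · by_cases hb : j = l <;> simp [hb, Finset.mul_sum]
        rw [Finset.sum_congr rfl fun l _ => h1 l, Finset.sum_sub_distrib]
        congr 1
        · rw [Finset.sum_mul, Finset.mul_sum]
        · exact sum_delta1 (fun l => c * (∑ e, Gm l i e x * Ric e k x)) j
      have e3 : ∑ l, ∑ e, Gm l j e x * RU i e k l x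
          = c * (∑ e, Gm i j e x * Ric e k x) - c * ((∑ l, Gm l j l x) * Ric i k x) := by
        have h1 : ∀ l : Fin m, ∑ e, Gm l j e x * RU i e k l x
            = (if i = l then c * (∑ e, Gm l j e x * Ric e k x) else 0)
              - c * (Gm l j l x * Ric i k x) := by
          intro l
          have h2 : ∀ e : Fin m, Gm l j e x * RU i e k l x
              = (if i = l then c * (Gm l j e x * Ric e k x) else 0)
                - (if e = l then c * (Gm l j e x * Ric i k x) else 0) := by
            intro e
            rw [hW4 i e k l x hx]
            by_cases ha : i = l <;> by_cases hb : e = l <;> simp [ha, hb] <;> ring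
          rw [Finset.sum_congr rfl fun e _ => h2 e, Finset.sum_sub_distrib]
          congr 1
          · by_cases ha : i = l <;> simp [ha, Finset.mul_sum]
          · exact sum_delta2 (fun e => c * (Gm l j e x * Ric i k x)) l
        rw [Finset.sum_congr rfl fun l _ => h1 l, Finset.sum_sub_distrib]
        congr 1
        · exact sum_delta1 (fun l => c * (∑ e, Gm l j e x * Ric e k x)) i
        · rw [Finset.sum_mul, Finset.mul_sum]
      have e4 : ∑ l, ∑ e, Gm l k e x * RU i j e l x
          = c * (∑ e, Gm i k e x * Ric j e x) - c * (∑ e, Gm j k e x * Ric i e x) := by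
        have h1 : ∀ l : Fin m, ∑ e, Gm l k e x * RU i j e l x
            = (if i = l then c * (∑ e, Gm l k e x * Ric j e x) else 0)
              - (if j = l then c * (∑ e, Gm l k e x * Ric i e x) else 0) := by
          intro l
          have h2 : ∀ e : Fin m, Gm l k e x * RU i j e l x
              = (if i = l then c * (Gm l k e x * Ric j e x) else 0)
                - (if j = l then c * (Gm l k e x * Ric i e x) else 0) := by
            intro e
            rw [hW4 i j e l x hx]
            by_cases ha : i = l <;> by_cases hb : j = l <;> simp [ha, hb] <;> ring
          rw [Finset.sum_congr rfl fun e _ => h2 e, Finset.sum_sub_distrib]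
          congr 1
          · by_cases ha : i = l <;> simp [ha, Finset.mul_sum]
          · by_cases hb : j = l <;> simp [hb, Finset.mul_sum]
        rw [Finset.sum_congr rfl fun l _ => h1 l, Finset.sum_sub_distrib]
        congr 1
        · exact sum_delta1 (fun l => c * (∑ e, Gm l k e x * Ric j e x)) i
        · exact sum_delta1 (fun l => c * (∑ e, Gm l k e x * Ric i e x)) j
      have e5 : ∑ l, ∑ e, Gm l e l x * RU i j k e x
          = c * ((∑ l, Gm l i l x) * Ric j k x) - c * ((∑ l, Gm l j l x) * Ric i k x) := by
        have h1 : ∀ l : Fin m, ∑ e, Gm l e l x * RU i j k e x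
            = c * (Gm l i l x * Ric j k x) - c * (Gm l j l x * Ric i k x) := by
          intro l
          have h2 : ∀ e : Fin m, Gm l e l x * RU i j k e x
              = (if i = e then c * (Gm l e l x * Ric j k x) else 0)
                - (if j = e then c * (Gm l e l x * Ric i k x) else 0) := by
            intro e
            rw [hW4 i j k e x hx]
            by_cases ha : i = e <;> by_cases hb : j = e <;> simp [ha, hb] <;> ring
          rw [Finset.sum_congr rfl fun e _ => h2 e, Finset.sum_sub_distrib]
          congr 1
          · exact sum_delta1 (fun e => c * (Gm l e l x * Ric j k x)) i
          · exact sum_delta1 (fun e => c * (Gm l e l x * Ric i k x)) j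
        rw [Finset.sum_congr rfl fun l _ => h1 l, Finset.sum_sub_distrib]
        congr 1
        · rw [Finset.sum_mul, Finset.mul_sum]
        · rw [Finset.sum_mul, Finset.mul_sum]
      rw [e1, e2, e3, e4, e5]
      ring
    have h0 : ∑ l, (nabRU l i j k l x + nabRU j l i k l x + nabRU i j l k l x) = 0 := by
      rw [Finset.sum_congr rfl fun l _ => hB2 l i j k l x hx]
      simp
    rw [Finset.sum_add_distrib, Finset.sum_add_distrib, hT1, hT2, hT3] at h0
    have hfac : ((pd i (Ric j k) x - ∑ e, Gm i j e x * Ric e k x - ∑ e, Gm i k e x * Ric j e x)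
        - (pd j (Ric i k) x - ∑ e, Gm j i e x * Ric e k x - ∑ e, Gm j k e x * Ric i e x))
          * (c - 1) = 0 := by
      linear_combination h0
    rcases mul_eq_zero.mp hfac with h | h
    · linarith
    · exact absurd (by linarith : c = 1) hc1
  -- the derivative of Ric in terms of Scal
  have hpdRicD : ∀ a j k, ∀ x ∈ U, pd a (Ric j k) x
      = 1/(m:ℝ) * pd a Scal x * g j k x + 1/(m:ℝ) * Scal x * pd a (g j k) x := by
    intro a j k x hx
    have h1 : pd a (Ric j k) x = pd a (fun y => (1/(m:ℝ) * Scal y) * g j k y) x :=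
      pd_congr a hU hx fun y hy => by rw [hRicg j k y hy]
    rw [h1, pd_mul a ((dScal x).const_mul _) (dg j k x), pd_const_mul a (dScal x)]
  -- pd of Scal vanishes on U
  have hpdScal0 : ∀ i, ∀ x ∈ U, pd i Scal x = 0 := by
    intro i x hx
    obtain ⟨hB1, hgs⟩ := hmat x hx
    have key : ∀ j k, pd i Scal x * g j k x = pd j Scal x * g i k x := by
      intro j k
      have hD := hDsym i j k x hx
      rw [hpdRicD i j k x hx, hpdRicD j i k x hx] at hD
      have hs1 : ∑ e, Gm i j e x * Ric e k x
          = 1/(m:ℝ) * Scal x * ∑ e, Gm i j e x * g e k x := by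
        rw [Finset.mul_sum]
        refine Finset.sum_congr rfl fun e _ => ?_
        rw [hRicg e k x hx]; ring
      have hs2 : ∑ e, Gm i k e x * Ric j e x
          = 1/(m:ℝ) * Scal x * ∑ e, Gm i k e x * g j e x := by
        rw [Finset.mul_sum]
        refine Finset.sum_congr rfl fun e _ => ?_
        rw [hRicg j e x hx]; ring
      have hs3 : ∑ e, Gm j i e x * Ric e k x
          = 1/(m:ℝ) * Scal x * ∑ e, Gm j i e x * g e k x := by
        rw [Finset.mul_sum]
        refine Finset.sum_congr rfl fun e _ => ?_
        rw [hRicg e k x hx]; ring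
      have hs4 : ∑ e, Gm j k e x * Ric i e x
          = 1/(m:ℝ) * Scal x * ∑ e, Gm j k e x * g i e x := by
        rw [Finset.mul_sum]
        refine Finset.sum_congr rfl fun e _ => ?_
        rw [hRicg i e x hx]; ring
      rw [hs1, hs2, hs3, hs4] at hD
      have hg1 := hnabg i j k x hx
      have hg2 := hnabg j i k x hx
      have hT := (hTsym i j k x).1
      have heq : 1/(m:ℝ) * (pd i Scal x * g j k x) = 1/(m:ℝ) * (pd j Scal x * g i k x) := by
        linear_combination hD - (1/(m:ℝ) * Scal x) * hg1 + (1/(m:ℝ) * Scal x) * hg2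
          + (1/(m:ℝ) * Scal x) * hT
      exact mul_left_cancel₀ (one_div_ne_zero hm0) heq
    have hcontr : ∑ j, ∑ k, ginv j k x * (pd i Scal x * g j k x)
        = ∑ j, ∑ k, ginv j k x * (pd j Scal x * g i k x) := by
      refine Finset.sum_congr rfl fun j _ => Finset.sum_congr rfl fun k _ => ?_
      rw [key j k]
    have hL : ∑ j, ∑ k, ginv j k x * (pd i Scal x * g j k x) = (m:ℝ) * pd i Scal x := by
      calc ∑ j, ∑ k, ginv j k x * (pd i Scal x * g j k x)
          = ∑ j, (∑ k, ginv j k x * g k j x) * pd i Scal x := by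
            refine Finset.sum_congr rfl fun j _ => ?_
            rw [Finset.sum_mul]
            refine Finset.sum_congr rfl fun k _ => ?_
            rw [hgsym j k]; ring
        _ = ∑ _j : Fin m, (1:ℝ) * pd i Scal x := by
            refine Finset.sum_congr rfl fun j _ => ?_
            rw [hB1 j j]; simp
        _ = (m:ℝ) * pd i Scal x := by simp [Finset.card_univ]
    have hR : ∑ j, ∑ k, ginv j k x * (pd j Scal x * g i k x) = pd i Scal x := by
      calc ∑ j, ∑ k, ginv j k x * (pd j Scal x * g i k x)
          = ∑ j, (∑ k, g i k x * ginv k j x) * pd j Scal x := by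
            refine Finset.sum_congr rfl fun j _ => ?_
            rw [Finset.sum_mul]
            refine Finset.sum_congr rfl fun k _ => ?_
            rw [hgs j k]; ring
        _ = ∑ j, (if i = j then (1:ℝ) else 0) * pd j Scal x := by
            refine Finset.sum_congr rfl fun j _ => ?_
            rw [hginv i j x hx]
        _ = pd i Scal x := by simp
    rw [hL, hR] at hcontr
    have hz : ((m:ℝ) - 1) * pd i Scal x = 0 := by linarith
    rcases mul_eq_zero.mp hz with h | h
    · exact absurd h hm1
    · exact h
  -- Scal is constant on U
  have hconst : ∀ x ∈ U, ∀ y ∈ U, Scal x = Scal y := by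
    intro x hx y hy
    have hder : ∀ z ∈ U, HasFDerivWithinAt Scal (0 : (Fin m → ℝ) →L[ℝ] ℝ) U z := by
      intro z hz
      have h1 : fderiv ℝ Scal z = 0 := fderiv_eq_zero_of_pd (fun a => hpdScal0 a z hz)
      have h2 := (dScal z).hasFDerivAt
      rw [h1] at h2
      exact h2.hasFDerivWithinAt
    have hb := hUc.norm_image_sub_le_of_norm_hasFDerivWithin_le hder
      (fun z _ => by simp : ∀ z ∈ U, ‖(0 : (Fin m → ℝ) →L[ℝ] ℝ)‖ ≤ (0:ℝ)) hy hx
    have h1 : ‖Scal x - Scal y‖ ≤ 0 := by simpa using hb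
    have h2 := le_antisymm h1 (norm_nonneg _)
    simpa [sub_eq_zero] using h2
  -- conclusion
  obtain ⟨x0, hx0⟩ := hne
  refine ⟨Scal x0 / ((m:ℝ) * ((m:ℝ) - 1)), fun x hx => by rw [hconst x hx x0 hx0], ?_⟩
  intro i j k l x hx
  rw [hRg i j k l x hx, hRicg j k x hx, hRicg i k x hx, ← hconst x hx x0 hx0, hc]
  field_simp
end

section
/- Let s(η) = −log|c^0 + c^i η_i| on an open set where c^0 + c^i η_i ≠ 0. Then the functions h_α(η) = (d_α + D_α^i η_i)/(c^0 + c^i η_i) are exactly the solutions of the system ∂^i C^j_α − s^i C^j_α − s^j C^i_α = 0, where C^i_α = ∂h_α/∂η_i: indeed, writing h_α = e^s y_α, the system is equivalent to ∂^i ∂^j y_α = 0, i.e. y_α affine in η. -/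
noncomputable def lmap {m : ℕ} (c : Fin m → ℝ) : (Fin m → ℝ) →L[ℝ] ℝ :=
  ∑ i, c i • (ContinuousLinearMap.proj i : (Fin m → ℝ) →L[ℝ] ℝ)

lemma lmap_apply {m : ℕ} (c : Fin m → ℝ) (v : Fin m → ℝ) :
    lmap c v = ∑ i, c i * v i := by
  simp [lmap, ContinuousLinearMap.sum_apply]

lemma lmap_single {m : ℕ} (c : Fin m → ℝ) (i : Fin m) :
    lmap c (Pi.single i 1) = c i := by
  rw [lmap_apply]
  rw [Finset.sum_eq_single i]
  · simp
  · intro j _ hj; simp [Pi.single_apply, hj]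
  · simp

lemma clm_apply_eq_sum {m : ℕ} (B : (Fin m → ℝ) →L[ℝ] ℝ) (v : Fin m → ℝ) :
    B v = ∑ i, v i * B (Pi.single i 1) := by
  have hv : v = ∑ i, v i • (Pi.single i 1 : Fin m → ℝ) := by
    funext j
    simp [Finset.sum_apply, Pi.single_apply, mul_comm]
  conv_lhs => rw [hv]
  simp [map_sum, smul_eq_mul]

lemma clm_ext_basis {m : ℕ} (B B' : (Fin m → ℝ) →L[ℝ] ℝ)
    (hb : ∀ i, B (Pi.single i 1) = B' (Pi.single i 1)) : B = B' := by
  ext v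
  · rw [clm_apply_eq_sum B, clm_apply_eq_sum B']
    simp [hb]

lemma hasFDerivAt_affine {m : ℕ} (c0 : ℝ) (c : Fin m → ℝ) (x : Fin m → ℝ) :
    HasFDerivAt (fun y => c0 + ∑ i, c i * y i) (lmap c) x := by
  have : (fun y : Fin m → ℝ => c0 + ∑ i, c i * y i) = fun y => c0 + lmap c y := by
    funext y; rw [lmap_apply]
  rw [this]
  simpa using (lmap c).hasFDerivAt

lemma HasFDerivAt.pd_eq {m : ℕ} {f : (Fin m → ℝ) → ℝ} {B : (Fin m → ℝ) →L[ℝ] ℝ}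
    {x : Fin m → ℝ} (hf : HasFDerivAt f B x) (i : Fin m) : pd i f x = B (Pi.single i 1) := by
  rw [pd, hf.fderiv]

lemma const_of_pd_zero {m : ℕ} {O : Set (Fin m → ℝ)} (hO : IsOpen O) (hC : Convex ℝ O)
    {f : (Fin m → ℝ) → ℝ} (hf : ∀ x ∈ O, DifferentiableAt ℝ f x)
    (hz : ∀ x ∈ O, fderiv ℝ f x = 0) {x y : Fin m → ℝ} (hx : x ∈ O) (hy : y ∈ O) :
    f x = f y := by
  refine hC.is_const_of_fderivWithin_eq_zero
    (fun z hz' => (hf z hz').differentiableWithinAt) (fun z hz' => ?_) hx hy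
  rw [fderivWithin_of_isOpen hO hz']
  exact hz z hz'

/-- with `s = −log|c^0 + c^i η_i|`, a smooth function `h` solves the system
`∂^i C^j − s^i C^j − s^j C^i = 0` (`C^i = ∂^i h`) iff
`h(η) = (d + D^i η_i)/(c^0 + c^i η_i)` for constants `d, D`. -/
theorem stmt11 {m : ℕ}
    (O : Set (Fin m → ℝ)) (hO : IsOpen O) (hC : Convex ℝ O) (hne : O.Nonempty)
    (c0 : ℝ) (c : Fin m → ℝ) (hc : ∀ x ∈ O, c0 + ∑ i, c i * x i ≠ 0)
    (s : (Fin m → ℝ) → ℝ) (hsdef : ∀ x, s x = -Real.log |c0 + ∑ i, c i * x i|)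
    (h : (Fin m → ℝ) → ℝ) (hh : ContDiffOn ℝ (⊤ : ℕ∞) h O)
    (C : Fin m → (Fin m → ℝ) → ℝ) (hCdef : ∀ i x, C i x = pd i h x)
    (sv : Fin m → (Fin m → ℝ) → ℝ) (hsv : ∀ i x, sv i x = pd i s x) :
    (∀ i j, ∀ x ∈ O, pd i (C j) x - sv i x * C j x - sv j x * C i x = 0) ↔
    ∃ (d : ℝ) (D : Fin m → ℝ), ∀ x ∈ O,
      h x = (d + ∑ i, D i * x i) / (c0 + ∑ i, c i * x i) := by
  classical
  set L : (Fin m → ℝ) → ℝ := fun y => c0 + ∑ i, c i * y i with hLdef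
  have hLder : ∀ x, HasFDerivAt L (lmap c) x := fun x => hasFDerivAt_affine c0 c x
  have hinv : ∀ x : Fin m → ℝ, L x ≠ 0 →
      HasFDerivAt (fun y => (L y)⁻¹) ((-(L x ^ 2)⁻¹) • lmap c) x := by
    intro x hx
    exact (hasDerivAt_inv hx).comp_hasFDerivAt x (hLder x)
  -- value of sv on O
  have hsvf : ∀ i x, x ∈ O → sv i x = -((L x)⁻¹ * c i) := by
    intro i x hx
    have hx0 : L x ≠ 0 := hc x hx
    have hs' : s = fun y => -Real.log (L y) := by
      funext y; rw [hsdef y, Real.log_abs]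
    have hd : HasFDerivAt s (-((L x)⁻¹ • lmap c)) x := by
      rw [hs']
      exact ((Real.hasDerivAt_log hx0).comp_hasFDerivAt x (hLder x)).neg
    rw [hsv, hd.pd_eq]
    simp [lmap_single]
  constructor
  · -- forward direction
    intro hsys
    obtain ⟨x0, hx0⟩ := hne
    have hhd : ∀ x ∈ O, DifferentiableAt ℝ h x := fun x hx =>
      (hh.differentiableOn (by simp)).differentiableAt (hO.mem_nhds hx)
    have hCd : ∀ j, ∀ x ∈ O, DifferentiableAt ℝ (C j) x := by
      intro j
      have h1 : ContDiffOn ℝ (⊤ : ℕ∞) (fderiv ℝ h) O := hh.fderiv_of_isOpen hO (by simp)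
      have h2 : ContDiffOn ℝ (⊤ : ℕ∞) (fun y => fderiv ℝ h y (Pi.single j 1)) O :=
        h1.clm_apply contDiffOn_const
      have h3 : C j = fun y => fderiv ℝ h y (Pi.single j 1) := by
        funext y; rw [hCdef]; rfl
      intro x hx
      rw [h3]
      exact (h2.differentiableOn (by simp)).differentiableAt (hO.mem_nhds hx)
    set g : Fin m → (Fin m → ℝ) → ℝ := fun j y => C j y * L y + c j * h y with hgdef
    have hgder : ∀ j, ∀ x ∈ O, HasFDerivAt (g j)
        ((C j x • lmap c + L x • fderiv ℝ (C j) x) + c j • fderiv ℝ h x) x := by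
      intro j x hx
      exact ((hCd j x hx).hasFDerivAt.mul (hLder x)).add
        ((hhd x hx).hasFDerivAt.const_mul (c j))
    have hgz : ∀ j, ∀ x ∈ O, fderiv ℝ (g j) x = 0 := by
      intro j x hx
      rw [(hgder j x hx).fderiv]
      refine clm_ext_basis _ _ (fun i => ?_)
      have hsys' := hsys i j x hx
      have hCi : C j x * c i + L x * pd i (C j) x + c j * pd i h x = 0 := by
        have h1 : pd i (C j) x = sv i x * C j x + sv j x * C i x := by linarith
        rw [h1, hsvf i x hx, hsvf j x hx, ← hCdef]
        have hx0 : L x ≠ 0 := hc x hx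
        field_simp
        ring
      simp only [ContinuousLinearMap.add_apply, ContinuousLinearMap.smul_apply,
        lmap_single, smul_eq_mul, ContinuousLinearMap.zero_apply]
      have hpd1 : fderiv ℝ (C j) x (Pi.single i 1) = pd i (C j) x := rfl
      have hpd2 : fderiv ℝ h x (Pi.single i 1) = pd i h x := rfl
      rw [hpd1, hpd2]
      linarith
    set D : Fin m → ℝ := fun j => g j x0 with hDdef
    have hgconst : ∀ j, ∀ x ∈ O, g j x = D j := by
      intro j x hx
      exact const_of_pd_zero hO hC
        (fun z hz => ((hgder j z hz).differentiableAt)) (hgz j) hx hx0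
    set z : (Fin m → ℝ) → ℝ := fun y => h y * L y - ∑ j, D j * y j with hzdef
    have hzder : ∀ x ∈ O, HasFDerivAt z
        ((h x • lmap c + L x • fderiv ℝ h x) - lmap D) x := by
      intro x hx
      refine ((hhd x hx).hasFDerivAt.mul (hLder x)).sub ?_
      have := hasFDerivAt_affine (0 : ℝ) D x
      simpa using this
    have hzz : ∀ x ∈ O, fderiv ℝ z x = 0 := by
      intro x hx
      rw [(hzder x hx).fderiv]
      refine clm_ext_basis _ _ (fun i => ?_)
      simp only [ContinuousLinearMap.sub_apply, ContinuousLinearMap.add_apply,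
        ContinuousLinearMap.smul_apply, lmap_single, smul_eq_mul,
        ContinuousLinearMap.zero_apply]
      have hpd2 : fderiv ℝ h x (Pi.single i 1) = C i x := (hCdef i x).symm
      rw [hpd2]
      have := hgconst i x hx
      rw [hgdef] at this
      simp only at this
      have : C i x * L x + c i * h x = D i := this
      linarith [this]
    refine ⟨z x0, D, fun x hx => ?_⟩
    have hzc : z x = z x0 :=
      const_of_pd_zero hO hC (fun w hw => (hzder w hw).differentiableAt) hzz hx hx0
    rw [eq_div_iff (hc x hx)]
    show h x * L x = z x0 + ∑ i, D i * x i
    have hzx : z x = h x * L x - ∑ j, D j * x j := rfl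
    linarith [hzc, hzx]
  · -- backward direction
    rintro ⟨d, D, hform⟩ i j x hx
    have hx0 : L x ≠ 0 := hc x hx
    -- explicit form of h near points of O
    set g : (Fin m → ℝ) → ℝ := fun y => (d + ∑ k, D k * y k) * (L y)⁻¹ with hgdef
    have hhg : ∀ y ∈ O, h y = g y := by
      intro y hy
      rw [hform y hy, hgdef]
      simp [div_eq_mul_inv]
      exact Or.inl rfl
    -- value of C on O
    have hCval : ∀ j, ∀ y ∈ O, C j y =
        (d + ∑ k, D k * y k) * (-(L y ^ 2)⁻¹ * c j) + (L y)⁻¹ * D j := by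
      intro j y hy
      have hy0 : L y ≠ 0 := hc y hy
      have hgder : HasFDerivAt g
          ((d + ∑ k, D k * y k) • ((-(L y ^ 2)⁻¹) • lmap c) + (L y)⁻¹ • lmap D) y :=
        (hasFDerivAt_affine d D y).mul (hinv y hy0)
      have heq : h =ᶠ[nhds y] g :=
        Filter.eventuallyEq_of_mem (hO.mem_nhds hy) (fun w hw => hhg w hw)
      rw [hCdef, pd, heq.fderiv_eq, hgder.fderiv]
      simp [lmap_single, mul_comm]
    -- derivative of L^2 at x
    have hsq : HasFDerivAt (fun y => L y ^ 2) ((2 * L x) • lmap c) x := by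
      have h0 := (hLder x).mul (hLder x)
      have h2 : (fun y => L y * L y) = fun y => L y ^ 2 := by funext y; ring
      rw [show L * L = fun y => L y ^ 2 from h2] at h0
      refine h0.congr_fderiv ?_
      ext v
      simp [smul_eq_mul]
      ring
    have hL2 : L x ^ 2 ≠ 0 := pow_ne_zero 2 hx0
    have h1 := (((hasDerivAt_inv hL2).comp_hasFDerivAt x hsq).neg).mul_const (c j)
    have h2 := (hasFDerivAt_affine d D x).mul h1
    have h3 := (hinv x hx0).mul_const (D j)
    have h4 := h2.add h3
    have hCGj : (C j) =ᶠ[nhds x]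
        (fun y => (d + ∑ k, D k * y k) * (-(L y ^ 2)⁻¹ * c j) + (L y)⁻¹ * D j) :=
      Filter.eventuallyEq_of_mem (hO.mem_nhds hx) (fun w hw => hCval j w hw)
    have hfd := (hCGj.fderiv_eq).trans h4.fderiv
    rw [pd, hfd, hsvf i x hx, hsvf j x hx, hCval j x hx, hCval i x hx]
    simp only [ContinuousLinearMap.add_apply, ContinuousLinearMap.smul_apply,
      ContinuousLinearMap.neg_apply, lmap_single, smul_eq_mul, Pi.neg_apply, Function.comp_apply]
    field_simp
    ring
end
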